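/- Let s ↦ A(s) be a continuous map from the extended real line into ℓ×ℓ matrices with ρ(A(s)) < c < 1 for all s. Then there exists N ∈ ℕ such that ‖A(s)^n‖ < 1/4 for all s ∈ ℝ and all n ≥ N. -/

import Mathlib

/-!
By Gelfand's formula, `ρ(a) < c` gives some `m ≥ 1` with `‖a ^ m‖ < c ^ m`; this strict
inequality persists on a neighbourhood of `a`, and writing `n = m + (n - m)` repeatedly then
bounds `‖b ^ n‖` by `κ c ^ n` for all `b` near `a`. The values of `A` on the extended real line
form a compact set of matrices, so finitely many such neighbourhoods cover it and
`‖A(s) ^ n‖ ≤ κ c ^ n` uniformly. Real matrices are handled through their complexification,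
whose operator norm dominates.
-/

open Filter Topology

theorem norm_pow_le_of_norm_pow_le {R : Type*} [NormedRing R] {a : R} {c C : ℝ} {m : ℕ}
    (hm : 0 < m) (hc : 0 < c) (hcC : c ≤ C) (ha : ‖a‖ ≤ C) (ham : ‖a ^ m‖ ≤ c ^ m) :
    ∀ n, 0 < n → ‖a ^ n‖ ≤ (C / c) ^ m * c ^ n := by
  have hCc : 1 ≤ C / c := (one_le_div hc).mpr hcC
  intro n
  induction n using Nat.strong_induction_on with
  | _ n ih =>
    intro hn
    rcases le_or_gt n m with hnm | hmn
    · calc ‖a ^ n‖ ≤ ‖a‖ ^ n := norm_pow_le' a hn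
        _ ≤ C ^ n := by gcongr
        _ = (C / c) ^ n * c ^ n := by rw [div_pow, div_mul_cancel₀ _ (by positivity)]
        _ ≤ (C / c) ^ m * c ^ n := by gcongr
    · obtain ⟨k, rfl⟩ := Nat.exists_eq_add_of_lt hmn
      calc ‖a ^ (m + k + 1)‖ ≤ ‖a ^ m‖ * ‖a ^ (k + 1)‖ := by
            rw [add_assoc, pow_add]; exact norm_mul_le _ _
        _ ≤ c ^ m * ((C / c) ^ m * c ^ (k + 1)) := by
            gcongr
            exact ih (k + 1) (by omega) k.succ_pos
        _ = (C / c) ^ m * c ^ (m + k + 1) := by ring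

section BanachAlgebra

variable {𝔸 : Type*} [NormedRing 𝔸] [NormedAlgebra ℂ 𝔸] [CompleteSpace 𝔸] {c : ℝ}

theorem spectralRadius_lt_ofReal_of_forall_norm_lt {a : 𝔸} (hc : 0 < c)
    (h : ∀ μ ∈ spectrum ℂ a, ‖μ‖ < c) : spectralRadius ℂ a < ENNReal.ofReal c := by
  rcases (spectrum ℂ a).eq_empty_or_nonempty with he | hne
  · simpa [spectralRadius, he] using hc
  · refine spectrum.spectralRadius_lt_of_forall_lt_of_nonempty hne fun μ hμ => ?_
    rw [← norm_toNNReal]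
    exact Real.toNNReal_lt_toNNReal_iff'.mpr ⟨h μ hμ, hc⟩

theorem exists_norm_pow_lt_pow {a : 𝔸} (h : spectralRadius ℂ a < ENNReal.ofReal c) :
    ∃ m, 0 < m ∧ ‖a ^ m‖ < c ^ m := by
  obtain ⟨m, hlt, hm⟩ := ((spectrum.pow_norm_pow_one_div_tendsto_nhds_spectralRadius a
    |>.eventually_lt_const h).and (eventually_gt_atTop 0)).exists
  rw [ENNReal.ofReal_lt_ofReal_iff'] at hlt
  refine ⟨m, hm, ?_⟩
  calc ‖a ^ m‖ = (‖a ^ m‖ ^ (1 / m : ℝ)) ^ m := by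
        rw [one_div, Real.rpow_inv_natCast_pow (norm_nonneg _) hm.ne']
    _ < c ^ m := by gcongr; exact hlt.1

theorem exists_eventually_nhds_norm_pow_le_mul_pow (a : 𝔸) (hc : 0 < c)
    (h : spectralRadius ℂ a < ENNReal.ofReal c) :
    ∃ κ, ∀ᶠ b in 𝓝 a, ∀ n, 0 < n → ‖b ^ n‖ ≤ κ * c ^ n := by
  obtain ⟨m, hm, ham⟩ := exists_norm_pow_lt_pow h
  set C := max (‖a‖ + 1) c
  have hnorm : ∀ᶠ b in 𝓝 a, ‖b‖ ≤ C :=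
    (continuous_norm.tendsto a).eventually_le_const ((lt_add_one _).trans_le (le_max_left _ _))
  have hpow : ∀ᶠ b in 𝓝 a, ‖b ^ m‖ < c ^ m :=
    ((continuous_norm.comp (continuous_pow m)).tendsto a).eventually_lt_const ham
  refine ⟨(C / c) ^ m, ?_⟩
  filter_upwards [hnorm, hpow] with b hb hbm
  exact norm_pow_le_of_norm_pow_le hm hc (le_max_right _ _) hb hbm.le

theorem IsCompact.exists_norm_pow_le_mul_pow {K : Set 𝔸} (hK : IsCompact K) (hc : 0 < c)
    (h : ∀ a ∈ K, spectralRadius ℂ a < ENNReal.ofReal c) :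
    ∃ κ, ∀ a ∈ K, ∀ n, 0 < n → ‖a ^ n‖ ≤ κ * c ^ n := by
  refine hK.induction_on
    (p := fun t => ∃ κ, ∀ a ∈ t, ∀ n, 0 < n → ‖a ^ n‖ ≤ κ * c ^ n)
    ⟨0, by simp⟩ (fun s t hst ⟨κ, hκ⟩ => ⟨κ, fun a ha => hκ a (hst ha)⟩) ?_ ?_
  · rintro s t ⟨κ, hκ⟩ ⟨κ', hκ'⟩
    refine ⟨max κ κ', fun a ha n hn => ?_⟩
    rcases ha with ha | ha
    · exact (hκ a ha n hn).trans (by gcongr; exact le_max_left _ _)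
    · exact (hκ' a ha n hn).trans (by gcongr; exact le_max_right _ _)
  · intro a ha
    obtain ⟨κ, hκ⟩ := exists_eventually_nhds_norm_pow_le_mul_pow a hc (h a ha)
    exact ⟨_, mem_nhdsWithin_of_mem_nhds hκ, κ, fun b hb => hb⟩

theorem IsCompact.eventually_norm_pow_lt {K : Set 𝔸} (hK : IsCompact K) (hc : 0 < c)
    (hc1 : c < 1) (h : ∀ a ∈ K, spectralRadius ℂ a < ENNReal.ofReal c) {ε : ℝ}
    (hε : 0 < ε) :
    ∀ᶠ n in atTop, ∀ a ∈ K, ‖a ^ n‖ < ε := by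
  obtain ⟨κ, hκ⟩ := hK.exists_norm_pow_le_mul_pow hc h
  have hlim : Tendsto (fun n : ℕ => κ * c ^ n) atTop (𝓝 0) := by
    simpa using (tendsto_pow_atTop_nhds_zero_of_lt_one hc.le hc1).const_mul κ
  filter_upwards [hlim.eventually_lt_const hε, eventually_gt_atTop 0] with n hn hn0 a ha
  exact (hκ a ha n hn0).trans_lt hn

end BanachAlgebra

theorem isCompact_insert_insert_range_of_tendsto {X : Type*} [TopologicalSpace X] {f : ℝ → X}
    (hf : Continuous f) {a b : X} (hbot : Tendsto f atBot (𝓝 a))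
    (htop : Tendsto f atTop (𝓝 b)) :
    IsCompact (insert a (insert b (Set.range f))) := by
  -- `t ↦ -|t|` and `t ↦ |t|` sweep out the two half-lines and tend to a single end each.
  have habs : Tendsto (fun t : ℝ => |t|) (cocompact ℝ) atTop := tendsto_norm_cocompact_atTop
  have hneg : IsCompact (insert a (Set.range fun t => f (-|t|))) :=
    (hbot.comp (tendsto_neg_atTop_atBot.comp habs)).isCompact_insert_range_of_cocompact
      (by fun_prop)
  have hpos : IsCompact (insert b (Set.range fun t => f |t|)) :=
    (htop.comp habs).isCompact_insert_range_of_cocompact (by fun_prop)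
  convert hneg.union hpos using 1
  ext x
  simp only [Set.mem_insert_iff, Set.mem_union, Set.mem_range]
  constructor
  · rintro (rfl | rfl | ⟨s, rfl⟩)
    · tauto
    · tauto
    · rcases le_total s 0 with hs | hs
      · exact Or.inl (Or.inr ⟨s, by rw [abs_of_nonpos hs, neg_neg]⟩)
      · exact Or.inr (Or.inr ⟨s, by rw [abs_of_nonneg hs]⟩)
  · rintro ((rfl | ⟨t, rfl⟩) | (rfl | ⟨t, rfl⟩)) <;> simp

open scoped Matrix.Norms.L2Operator in
theorem Matrix.norm_toEuclideanCLM_le_norm_map_ofReal {n : Type*} [Fintype n] [DecidableEq n]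
    (M : Matrix n n ℝ) :
    ‖Matrix.toEuclideanCLM (𝕜 := ℝ) M‖ ≤ ‖M.map Complex.ofReal‖ := by
  refine ContinuousLinearMap.opNorm_le_bound _ (norm_nonneg _) fun x => ?_
  set y : EuclideanSpace ℂ n := WithLp.toLp 2 (Complex.ofReal ∘ x)
  have hy : ‖y‖ = ‖x‖ := by simp [y, EuclideanSpace.norm_eq]
  calc ‖Matrix.toEuclideanCLM (𝕜 := ℝ) M x‖
      = ‖(EuclideanSpace.equiv n ℂ).symm ((M.map Complex.ofReal).mulVec y)‖ := by
        simp [y, EuclideanSpace.norm_eq, Matrix.mulVec, dotProduct, ← Complex.ofReal_mul,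
          ← Complex.ofReal_sum]
    _ ≤ ‖M.map Complex.ofReal‖ * ‖x‖ := hy ▸ (M.map Complex.ofReal).l2_opNorm_mulVec y

/-- Corollary 3.5: if `s ↦ A(s)` is continuous on the extended real
line (i.e. continuous on `ℝ` with matrix limits `A₋, A₊` at `∓∞`) and every value has
all complex eigenvalues of modulus `< c` (with `c ∈ (0,1)`), then there is `N ∈ ℕ`
such that `‖A(s)^n‖ < 1/4` for all `s ∈ ℝ` and `n ≥ N`. -/
theorem stmt8 (ℓ : ℕ) (A : ℝ → Matrix (Fin ℓ) (Fin ℓ) ℝ) (hA : Continuous A)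
    (Ap Am : Matrix (Fin ℓ) (Fin ℓ) ℝ)
    (hAp : Tendsto A atTop (nhds Ap)) (hAm : Tendsto A atBot (nhds Am))
    (c : ℝ) (hc0 : 0 < c) (hc1 : c < 1)
    (hspec : ∀ s : ℝ, ∀ μ ∈ spectrum ℂ ((A s).map Complex.ofReal), ‖μ‖ < c)
    (hspecp : ∀ μ ∈ spectrum ℂ (Ap.map Complex.ofReal), ‖μ‖ < c)
    (hspecm : ∀ μ ∈ spectrum ℂ (Am.map Complex.ofReal), ‖μ‖ < c) :
    ∃ N : ℕ, ∀ (s : ℝ) (n : ℕ), N ≤ n →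
      ‖(Matrix.toEuclideanCLM (𝕜 := ℝ) (A s)) ^ n‖ < 1 / 4 := by
  open scoped Matrix.Norms.L2Operator in
  set K := (fun M : Matrix (Fin ℓ) (Fin ℓ) ℝ => M.map Complex.ofReal) ''
    insert Am (insert Ap (Set.range A))
  have hK : IsCompact K := (isCompact_insert_insert_range_of_tendsto hA hAm hAp).image
    (continuous_id.matrix_map Complex.continuous_ofReal)
  have hρ : ∀ a ∈ K, spectralRadius ℂ a < ENNReal.ofReal c := by
    rintro _ ⟨M, rfl | rfl | ⟨s, rfl⟩, rfl⟩
    exacts [spectralRadius_lt_ofReal_of_forall_norm_lt hc0 hspecm,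
      spectralRadius_lt_ofReal_of_forall_norm_lt hc0 hspecp,
      spectralRadius_lt_ofReal_of_forall_norm_lt hc0 (hspec s)]
  obtain ⟨N, hN⟩ := eventually_atTop.mp (hK.eventually_norm_pow_lt hc0 hc1 hρ
    (by norm_num : (0 : ℝ) < 1 / 4))
  refine ⟨N, fun s n hn => ?_⟩
  calc ‖(Matrix.toEuclideanCLM (𝕜 := ℝ) (A s)) ^ n‖
      = ‖Matrix.toEuclideanCLM (𝕜 := ℝ) (A s ^ n)‖ := by rw [map_pow]
    _ ≤ ‖(A s ^ n).map Complex.ofReal‖ := Matrix.norm_toEuclideanCLM_le_norm_map_ofReal _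
    _ = ‖(A s).map Complex.ofReal ^ n‖ :=
        congrArg norm (map_pow Complex.ofRealHom.mapMatrix (A s) n)
    _ < 1 / 4 := hN n hn _ ⟨A s, by simp, rfl⟩
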